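/- Let g be a real symmetric invertible n×n matrix of signature (r,s), i.e., there exists an invertible matrix Q with QᵀgQ diagonal with r diagonal entries +1 and s diagonal entries −1 (r + s = n). Let 1 ≤ p ≤ n, and define the induced symmetric matrix g̃, indexed by the p-element subsets of {1,…,n}, by g̃_{I,J} := det(g_{I,J}), where g_{I,J} is the p×p submatrix of g with rows indexed by I and columns by J (in increasing order). Then g̃ is symmetric and invertible, and has signature (C(n,p) − N(r,s,p), N(r,s,p)), i.e., there exists an invertible matrix P such that Pᵀg̃P is diagonal with exactly N(r,s,p) entries equal to −1 and all other entries equal to +1, where N(r,s,p) := Σ_{k=1}^{⌈p/2⌉} C(s, 2k−1)·C(r, p−2k+1). -/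

import Mathlib

open Matrix

/-- The induced metric on the `p`-th exterior power: it is indexed by the
`p`-element subsets of `{1,…,n}` and its `(I,J)` entry is the minor
`det g_{I,J}` with rows `I` and columns `J` taken in increasing order. -/
noncomputable def inducedMet (n p : ℕ) (g : Matrix (Fin n) (Fin n) ℝ) :
    Matrix {s : Finset (Fin n) // s.card = p} {s : Finset (Fin n) // s.card = p} ℝ :=
  Matrix.of fun I J =>
    (g.submatrix (fun a : Fin p => ((I.1.orderIsoOfFin I.2) a : Fin n))
      (fun b : Fin p => ((J.1.orderIsoOfFin J.2) b : Fin n))).det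

/-- `N(r,s,p) = Σ_{k=1}^{⌈p/2⌉} C(s,2k−1)·C(r,p−2k+1)`, the number of
`p`-element subsets containing an odd number of negative-norm indices. -/
def negCount (r s p : ℕ) : ℕ :=
  ∑ k ∈ Finset.Icc 1 ((p + 1) / 2), Nat.choose s (2 * k - 1) * Nat.choose r (p + 1 - 2 * k)

namespace Stmt17

open Finset

variable {n p : ℕ}

/-- The index type: `p`-element subsets of `Fin n`. -/
abbrev Idx (n p : ℕ) := {t : Finset (Fin n) // t.card = p}

/-- The increasing enumeration of a `p`-element subset. -/
noncomputable def mono (I : Idx n p) : Fin p → Fin n :=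
  fun a => ((I.1.orderIsoOfFin I.2) a : Fin n)

lemma mono_eq (I : Idx n p) : mono I = ⇑(I.1.orderEmbOfFin I.2) := rfl

lemma mono_mem (I : Idx n p) (a : Fin p) : mono I a ∈ I.1 :=
  Finset.orderEmbOfFin_mem _ I.2 _

lemma mono_injective (I : Idx n p) : Function.Injective (mono I) := by
  rw [mono_eq]; exact (I.1.orderEmbOfFin I.2).injective

lemma image_mono (I : Idx n p) : Finset.image (mono I) Finset.univ = I.1 := by
  rw [← Finset.coe_inj, Finset.coe_image, Finset.coe_univ, Set.image_univ, mono_eq]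
  exact Finset.range_orderEmbOfFin _ _

lemma mono_surjOn (I : Idx n p) {i : Fin n} (hi : i ∈ I.1) : ∃ a, mono I a = i := by
  have := (image_mono I) ▸ hi
  simpa using Finset.mem_image.mp this

lemma inducedMet_apply (g : Matrix (Fin n) (Fin n) ℝ) (I J : Idx n p) :
    inducedMet n p g I J = (g.submatrix (mono I) (mono J)).det := rfl

/-- Cauchy–Binet formula for a `p × n` times an `n × p` matrix. -/
lemma cauchyBinet (A : Matrix (Fin p) (Fin n) ℝ) (B : Matrix (Fin n) (Fin p) ℝ) :
    (A * B).det = ∑ K : Idx n p,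
      (A.submatrix id (mono K)).det * (B.submatrix (mono K) id).det := by
  classical
  have step1 : (A * B).det = ∑ f : Fin p → Fin n,
      (A.submatrix id f).det * ∏ i, B (f i) i := by
    simp only [det_apply', mul_apply, Finset.prod_univ_sum, Finset.mul_sum,
      Fintype.piFinset_univ]
    rw [Finset.sum_comm]
    refine Finset.sum_congr rfl fun f _ => ?_
    rw [Finset.sum_mul]
    refine Finset.sum_congr rfl fun σ _ => ?_
    rw [mul_assoc, ← Finset.prod_mul_distrib]
    simp [Matrix.submatrix_apply]
  rw [step1]
  have step2 : ∑ f : Fin p → Fin n, (A.submatrix id f).det * ∏ i, B (f i) i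
      = ∑ f ∈ Finset.univ.filter (fun f : Fin p → Fin n => Function.Injective f),
        (A.submatrix id f).det * ∏ i, B (f i) i := by
    refine (Finset.sum_filter_of_ne fun f _ hne => ?_).symm
    by_contra hf
    apply hne
    rw [Function.not_injective_iff] at hf
    obtain ⟨a, b, hab, hne'⟩ := hf
    have : (A.submatrix id f).det = 0 := by
      rw [← Matrix.det_transpose]
      refine Matrix.det_zero_of_row_eq hne' ?_
      ext j
      simp [Matrix.submatrix_apply, hab]
    rw [this, zero_mul]
  rw [step2]
  have step3 : ∑ f ∈ Finset.univ.filter (fun f : Fin p → Fin n => Function.Injective f),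
      (A.submatrix id f).det * ∏ i, B (f i) i
      = ∑ x : Idx n p × Equiv.Perm (Fin p),
        (A.submatrix id (mono x.1 ∘ ⇑x.2)).det * ∏ i, B (mono x.1 (x.2 i)) i := by
    refine (Finset.sum_bij
      (fun (x : Idx n p × Equiv.Perm (Fin p)) (_ : x ∈ Finset.univ) => mono x.1 ∘ ⇑x.2)
      ?_ ?_ ?_ ?_).symm
    · intro x _
      simp only [Finset.mem_filter, Finset.mem_univ, true_and]
      exact (mono_injective x.1).comp x.2.injective
    · intro x _ y _ h
      have himg : ∀ z : Idx n p × Equiv.Perm (Fin p),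
          Finset.image (mono z.1 ∘ ⇑z.2) Finset.univ = z.1.1 := by
        intro z
        rw [← Finset.image_image, Finset.image_univ_equiv, image_mono]
      have h' : mono x.1 ∘ ⇑x.2 = mono y.1 ∘ ⇑y.2 := h
      have h1 : x.1 = y.1 := Subtype.ext (by rw [← himg x, ← himg y, h'])
      have h2 : x.2 = y.2 := by
        refine Equiv.ext fun a => ?_
        have ha := congrFun h' a
        simp only [Function.comp_apply, ← h1] at ha
        exact mono_injective x.1 ha
      exact Prod.ext h1 h2
    · intro f hf
      simp only [Finset.mem_filter, Finset.mem_univ, true_and] at hf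
      set K : Idx n p := ⟨Finset.image f Finset.univ, by
        rw [Finset.card_image_of_injective _ hf, Finset.card_univ, Fintype.card_fin]⟩ with hK
      have hfm : ∀ a, f a ∈ K.1 := fun a => Finset.mem_image.mpr ⟨a, Finset.mem_univ a, rfl⟩
      set σ' : Fin p → Fin p := fun a => (K.1.orderIsoOfFin K.2).symm ⟨f a, hfm a⟩ with hσ'
      have hσinj : Function.Injective σ' := by
        intro a b hab
        have h2 := congrArg (fun z => ((K.1.orderIsoOfFin K.2) z : Fin n)) hab
        simp only [hσ', OrderIso.apply_symm_apply] at h2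
        exact hf h2
      have hσbij : Function.Bijective σ' := (Finite.injective_iff_bijective).mp hσinj
      refine ⟨⟨K, Equiv.ofBijective σ' hσbij⟩, Finset.mem_univ _, ?_⟩
      funext a
      show ((K.1.orderIsoOfFin K.2) ((K.1.orderIsoOfFin K.2).symm ⟨f a, hfm a⟩) : Fin n) = f a
      rw [OrderIso.apply_symm_apply]
    · intro x _
      rfl
  rw [step3, Fintype.sum_prod_type]
  refine Finset.sum_congr rfl fun K _ => ?_
  rw [det_apply' (M := B.submatrix (mono K) id), Finset.mul_sum]
  refine Finset.sum_congr rfl fun σ _ => ?_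
  have h1 : A.submatrix id (mono K ∘ ⇑σ) = (A.submatrix id (mono K)).submatrix id ⇑σ := by
    simp [Matrix.submatrix_submatrix]
  rw [h1, Matrix.det_permute']
  simp only [Matrix.submatrix_apply, id_eq]
  ring

lemma inducedMet_transpose (g : Matrix (Fin n) (Fin n) ℝ) :
    (inducedMet n p g)ᵀ = inducedMet n p gᵀ := by
  ext I J
  rw [Matrix.transpose_apply, inducedMet_apply, inducedMet_apply, ← Matrix.det_transpose,
    Matrix.transpose_submatrix]

lemma inducedMet_mul (M N : Matrix (Fin n) (Fin n) ℝ) :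
    inducedMet n p (M * N) = inducedMet n p M * inducedMet n p N := by
  ext I J
  rw [inducedMet_apply, Matrix.mul_apply]
  have h : (M * N).submatrix (mono I) (mono J)
      = M.submatrix (mono I) id * N.submatrix id (mono J) := by
    ext a b
    simp [Matrix.mul_apply, Matrix.submatrix_apply]
  rw [h, cauchyBinet]
  refine Finset.sum_congr rfl fun K _ => ?_
  rw [inducedMet_apply, inducedMet_apply, Matrix.submatrix_submatrix, Matrix.submatrix_submatrix]
  simp

lemma inducedMet_diagonal (d : Fin n → ℝ) :
    inducedMet n p (Matrix.diagonal d)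
      = Matrix.diagonal (fun I : Idx n p => ∏ a, d (mono I a)) := by
  ext I J
  by_cases h : I = J
  · subst h
    rw [inducedMet_apply, Matrix.submatrix_diagonal _ _ (mono_injective I),
      Matrix.det_diagonal, Matrix.diagonal_apply_eq]
    rfl
  · rw [inducedMet_apply, Matrix.diagonal_apply_ne _ h]
    have hne : ∃ i ∈ I.1, i ∉ J.1 := by
      by_contra hc
      push_neg at hc
      exact h (Subtype.ext (Finset.eq_of_subset_of_card_le hc (by rw [I.2, J.2])))
    obtain ⟨i, hiI, hiJ⟩ := hne
    obtain ⟨a, ha⟩ := mono_surjOn I hiI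
    refine Matrix.det_eq_zero_of_row_eq_zero a fun b => ?_
    rw [Matrix.submatrix_apply, Matrix.diagonal_apply_ne]
    intro hcon
    apply hiJ
    rw [← ha, hcon]
    exact mono_mem J b

lemma inducedMet_one : inducedMet n p (1 : Matrix (Fin n) (Fin n) ℝ) = 1 := by
  rw [← Matrix.diagonal_one, inducedMet_diagonal]
  simp

lemma count_odd (r s p : ℕ) (T : Finset (Fin n)) (hs : T.card = s) (hr : Tᶜ.card = r) :
    (Finset.univ.filter fun I : Idx n p => Odd (I.1 ∩ T).card).card = negCount r s p := by
  classical
  have ha : (Finset.univ.filter fun I : Idx n p => Odd (I.1 ∩ T).card).card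
      = ((Finset.univ.powersetCard p).filter fun t : Finset (Fin n) =>
          Odd (t ∩ T).card).card := by
    refine Finset.card_bij (fun I _ => I.1) ?_ ?_ ?_
    · intro I hI
      simp only [Finset.mem_filter, Finset.mem_powersetCard, Finset.mem_univ, true_and] at hI ⊢
      exact ⟨⟨Finset.subset_univ _, I.2⟩, hI⟩
    · intro I _ J _ h
      exact Subtype.ext h
    · intro t ht
      simp only [Finset.mem_filter, Finset.mem_powersetCard] at ht
      exact ⟨⟨t, ht.1.2⟩, by simp [Finset.mem_filter, ht.2], rfl⟩
  rw [ha]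
  have hb : ((Finset.univ.powersetCard p).filter fun t : Finset (Fin n) => Odd (t ∩ T).card)
      = ((Finset.range (p + 1)).filter Odd).biUnion (fun j =>
          (Finset.univ.powersetCard p).filter fun t => (t ∩ T).card = j) := by
    ext t
    simp only [Finset.mem_filter, Finset.mem_biUnion, Finset.mem_range, Finset.mem_powersetCard,
      Finset.mem_univ, Finset.subset_univ, true_and]
    constructor
    · rintro ⟨hc, hodd⟩
      exact ⟨(t ∩ T).card, ⟨Nat.lt_succ_of_le (hc ▸ Finset.card_le_card Finset.inter_subset_left),
        hodd⟩, hc, rfl⟩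
    · rintro ⟨j, ⟨_, hodd⟩, hc, hj⟩
      exact ⟨hc, hj ▸ hodd⟩
  rw [hb, Finset.card_biUnion]
  · have hc : ∀ j ∈ (Finset.range (p + 1)).filter Odd,
        ((Finset.univ.powersetCard p).filter fun t : Finset (Fin n) => (t ∩ T).card = j).card
        = Nat.choose s j * Nat.choose r (p - j) := by
      intro j hj
      simp only [Finset.mem_filter, Finset.mem_range] at hj
      have hjp : j ≤ p := Nat.lt_succ_iff.mp hj.1
      have : ((Finset.univ.powersetCard p).filter fun t : Finset (Fin n) => (t ∩ T).card = j).card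
          = ((T.powersetCard j) ×ˢ (Tᶜ.powersetCard (p - j))).card := by
        refine Finset.card_bij (fun t _ => (t ∩ T, t \ T)) ?_ ?_ ?_
        · intro t ht
          simp only [Finset.mem_filter, Finset.mem_powersetCard, Finset.mem_univ,
            Finset.subset_univ, true_and] at ht
          simp only [Finset.mem_product, Finset.mem_powersetCard]
          refine ⟨⟨Finset.inter_subset_right, ht.2⟩, ⟨?_, ?_⟩⟩
          · intro x hx
            simp only [Finset.mem_sdiff] at hx
            simp [Finset.mem_compl, hx.2]
          · have := Finset.card_inter_add_card_sdiff t T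
            omega
        · intro t₁ h₁ t₂ h₂ h
          have h1 := congrArg Prod.fst h
          have h2 := congrArg Prod.snd h
          simp only at h1 h2
          rw [← Finset.sdiff_union_inter t₁ T, ← Finset.sdiff_union_inter t₂ T, h1, h2]
        · rintro ⟨a, b⟩ hab
          simp only [Finset.mem_product, Finset.mem_powersetCard] at hab
          obtain ⟨⟨haT, haj⟩, hbT, hbj⟩ := hab
          have hdisj : Disjoint a b := by
            refine Finset.disjoint_left.mpr fun x hxa hxb => ?_
            exact (Finset.mem_compl.mp (hbT hxb)) (haT hxa)
          have hinter : (a ∪ b) ∩ T = a := by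
            rw [Finset.union_inter_distrib_right]
            have h1 : a ∩ T = a := Finset.inter_eq_left.mpr haT
            have h2 : b ∩ T = ∅ := by
              refine Finset.eq_empty_of_forall_notMem fun x hx => ?_
              simp only [Finset.mem_inter] at hx
              exact (Finset.mem_compl.mp (hbT hx.1)) hx.2
            rw [h1, h2, Finset.union_empty]
          have hsdiff : (a ∪ b) \ T = b := by
            rw [Finset.union_sdiff_distrib]
            have h1 : a \ T = ∅ := by
              refine Finset.eq_empty_of_forall_notMem fun x hx => ?_
              simp only [Finset.mem_sdiff] at hx
              exact hx.2 (haT hx.1)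
            have h2 : b \ T = b := by
              refine Finset.sdiff_eq_self_of_disjoint ?_
              refine Finset.disjoint_left.mpr fun x hxb hxT => ?_
              exact (Finset.mem_compl.mp (hbT hxb)) hxT
            rw [h1, h2, Finset.empty_union]
          refine ⟨a ∪ b, ?_, ?_⟩
          · simp only [Finset.mem_filter, Finset.mem_powersetCard, Finset.mem_univ,
              Finset.subset_univ, true_and]
            constructor
            · rw [Finset.card_union_of_disjoint hdisj, haj, hbj]; omega
            · rw [hinter, haj]
          · show ((a ∪ b) ∩ T, (a ∪ b) \ T) = (a, b)
            rw [hinter, hsdiff]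
      rw [this, Finset.card_product, Finset.card_powersetCard, Finset.card_powersetCard, hs, hr]
    rw [Finset.sum_congr rfl hc]
    unfold negCount
    refine Finset.sum_nbij' (i := fun j => (j + 1) / 2) (j := fun k => 2 * k - 1)
      ?_ ?_ ?_ ?_ ?_
    · intro j hj
      simp only [Finset.mem_filter, Finset.mem_range, Nat.odd_iff] at hj
      simp only [Finset.mem_Icc]
      omega
    · intro k hk
      simp only [Finset.mem_Icc] at hk
      simp only [Finset.mem_filter, Finset.mem_range, Nat.odd_iff]
      omega
    · intro j hj
      simp only [Finset.mem_filter, Finset.mem_range, Nat.odd_iff] at hj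
      show 2 * ((j + 1) / 2) - 1 = j
      omega
    · intro k hk
      simp only [Finset.mem_Icc] at hk
      show (2 * k - 1 + 1) / 2 = k
      omega
    · intro j hj
      simp only [Finset.mem_filter, Finset.mem_range, Nat.odd_iff] at hj
      have h1 : 2 * ((j + 1) / 2) - 1 = j := by omega
      have h2 : p + 1 - 2 * ((j + 1) / 2) = p - j := by omega
      show Nat.choose s j * Nat.choose r (p - j)
        = Nat.choose s (2 * ((j + 1) / 2) - 1) * Nat.choose r (p + 1 - 2 * ((j + 1) / 2))
      rw [h1, h2]
  · intro j hj k hk hjk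
    refine Finset.disjoint_left.mpr fun t ht1 ht2 => ?_
    simp only [Finset.mem_filter] at ht1 ht2
    exact hjk (ht1.2 ▸ ht2.2 ▸ rfl)

end Stmt17

/-- **Signature of the induced metric.** If `g` is symmetric invertible of
signature `(r,s)` (i.e. congruent to a `±1` diagonal matrix with `r` entries
`+1` and `s` entries `−1`), then the induced metric `g̃` on the `p`-th
exterior power is symmetric, invertible, and of signature
`(C(n,p) − N(r,s,p), N(r,s,p))`. -/
theorem stmt_17 (n p r s : ℕ) (hp1 : 1 ≤ p) (hpn : p ≤ n) (hrs : r + s = n)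
    (g : Matrix (Fin n) (Fin n) ℝ) (hsym : gᵀ = g)
    (hsig : ∃ (Q : Matrix (Fin n) (Fin n) ℝ) (d : Fin n → ℝ),
      IsUnit Q ∧ Qᵀ * g * Q = Matrix.diagonal d ∧
      (∀ i, d i = 1 ∨ d i = -1) ∧
      (Finset.univ.filter fun i => d i = 1).card = r ∧
      (Finset.univ.filter fun i => d i = -1).card = s) :
    (inducedMet n p g)ᵀ = inducedMet n p g ∧
    IsUnit (inducedMet n p g) ∧
    ∃ (P : Matrix {t : Finset (Fin n) // t.card = p}
          {t : Finset (Fin n) // t.card = p} ℝ)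
      (d' : {t : Finset (Fin n) // t.card = p} → ℝ),
      IsUnit P ∧ Pᵀ * inducedMet n p g * P = Matrix.diagonal d' ∧
      (∀ I, d' I = 1 ∨ d' I = -1) ∧
      (Finset.univ.filter fun I => d' I = 1).card = Nat.choose n p - negCount r s p ∧
      (Finset.univ.filter fun I => d' I = -1).card = negCount r s p := by
  classical
  obtain ⟨Q, d, hQ, hQgQ, hd, hr1, hs1⟩ := hsig
  -- the negative index set
  set T : Finset (Fin n) := Finset.univ.filter (fun i => d i = -1) with hT
  have hTmem : ∀ i, i ∈ T ↔ d i = -1 := by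
    intro i; simp [hT]
  have hTc : Tᶜ.card = r := by
    have : Tᶜ = Finset.univ.filter (fun i => d i = 1) := by
      ext i
      simp only [Finset.mem_compl, hTmem, Finset.mem_filter, Finset.mem_univ, true_and]
      constructor
      · intro h; rcases hd i with h1 | h1
        · exact h1
        · exact absurd h1 h
      · intro h; rw [h]; norm_num
    rw [this, hr1]
  -- the diagonal entries of the induced metric
  set d' : Stmt17.Idx n p → ℝ := fun I => (-1 : ℝ) ^ (I.1 ∩ T).card with hd'def
  have hd' : ∀ I, d' I = 1 ∨ d' I = -1 := by
    intro I
    rcases Nat.even_or_odd (I.1 ∩ T).card with h | h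
    · exact Or.inl (Even.neg_one_pow h)
    · exact Or.inr (Odd.neg_one_pow h)
  have hd'neg : ∀ I, d' I = -1 ↔ Odd (I.1 ∩ T).card := by
    intro I
    constructor
    · intro h
      rcases Nat.even_or_odd (I.1 ∩ T).card with he | ho
      · exfalso
        rw [hd'def] at h
        simp only at h
        rw [Even.neg_one_pow he] at h
        norm_num at h
      · exact ho
    · intro h
      rw [hd'def]
      simp only
      exact Odd.neg_one_pow h
  -- the product formula
  have hprod : ∀ I : Stmt17.Idx n p, (∏ a, d (Stmt17.mono I a)) = d' I := by
    intro I
    have h1 : (∏ a, d (Stmt17.mono I a)) = ∏ i ∈ I.1, d i := by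
      rw [← Stmt17.image_mono I,
        Finset.prod_image (fun a _ b _ h => Stmt17.mono_injective I h)]
    rw [h1]
    have h2 : ∀ i ∈ I.1, d i = if i ∈ T then (-1 : ℝ) else 1 := by
      intro i _
      by_cases h : i ∈ T
      · rw [if_pos h]; exact (hTmem i).mp h
      · rw [if_neg h]
        rcases hd i with h1 | h1
        · exact h1
        · exact absurd ((hTmem i).mpr h1) h
    rw [Finset.prod_congr rfl h2,
      ← Finset.prod_filter_mul_prod_filter_not I.1 (· ∈ T)]
    have h3 : (∏ i ∈ I.1.filter (· ∈ T), if i ∈ T then (-1 : ℝ) else 1)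
        = (-1 : ℝ) ^ (I.1 ∩ T).card := by
      rw [Finset.prod_congr rfl (fun i hi => if_pos (Finset.mem_filter.mp hi).2),
        Finset.prod_const, Finset.filter_mem_eq_inter]
    have h4 : (∏ i ∈ I.1.filter (fun i => ¬ i ∈ T), if i ∈ T then (-1 : ℝ) else 1) = 1 := by
      refine Finset.prod_eq_one fun i hi => if_neg (Finset.mem_filter.mp hi).2
    rw [h3, h4, mul_one, hd'def]
  -- the congruence
  have key : (inducedMet n p Q)ᵀ * inducedMet n p g * inducedMet n p Q
      = Matrix.diagonal d' := by
    rw [Stmt17.inducedMet_transpose, ← Stmt17.inducedMet_mul, ← Stmt17.inducedMet_mul,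
      hQgQ, Stmt17.inducedMet_diagonal]
    have : (fun I : Stmt17.Idx n p => ∏ a, d (Stmt17.mono I a)) = d' := funext hprod
    rw [this]
  -- invertibility of the transition matrix
  have hQQ : Q * (↑hQ.unit⁻¹ : Matrix (Fin n) (Fin n) ℝ) = 1 := by
    have h := hQ.unit.mul_inv
    rwa [hQ.unit_spec] at h
  have hPP : inducedMet n p Q * inducedMet n p (↑hQ.unit⁻¹ : Matrix (Fin n) (Fin n) ℝ) = 1 := by
    rw [← Stmt17.inducedMet_mul, hQQ, Stmt17.inducedMet_one]
  have hPunit : IsUnit (inducedMet n p Q) := by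
    refine (Matrix.isUnit_iff_isUnit_det _).mpr (IsUnit.of_mul_eq_one (inducedMet n p (↑hQ.unit⁻¹ : Matrix (Fin n) (Fin n) ℝ)).det ?_)
    rw [← Matrix.det_mul, hPP, Matrix.det_one]
  -- invertibility of the induced metric
  have hgunit : IsUnit (inducedMet n p g) := by
    have hdet := congrArg Matrix.det key
    rw [Matrix.det_mul, Matrix.det_mul, Matrix.det_diagonal] at hdet
    have hne : (∏ I, d' I) ≠ 0 := by
      refine Finset.prod_ne_zero_iff.mpr fun I _ => ?_
      rcases hd' I with h | h <;> rw [h] <;> norm_num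
    refine (Matrix.isUnit_iff_isUnit_det _).mpr (isUnit_iff_ne_zero.mpr fun h0 => hne ?_)
    rw [← hdet, h0]
    ring
  -- symmetry
  have hsymm : (inducedMet n p g)ᵀ = inducedMet n p g := by
    rw [Stmt17.inducedMet_transpose, hsym]
  refine ⟨hsymm, hgunit, inducedMet n p Q, d', hPunit, key, hd', ?_, ?_⟩
  · -- count of +1
    have hminus : (Finset.univ.filter fun I => d' I = -1).card = negCount r s p := by
      rw [Finset.filter_congr (fun I _ => hd'neg I)]
      exact Stmt17.count_odd r s p T hs1 hTc
    have hsplit := Finset.card_filter_add_card_filter_not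
      (s := (Finset.univ : Finset (Stmt17.Idx n p))) (p := fun I => d' I = 1)
    have hneg : (Finset.univ.filter fun I : Stmt17.Idx n p => ¬ d' I = 1)
        = Finset.univ.filter fun I => d' I = -1 := by
      refine Finset.filter_congr fun I _ => ?_
      constructor
      · intro h
        rcases hd' I with h1 | h1
        · exact absurd h1 h
        · exact h1
      · intro h
        rw [h]; norm_num
    rw [hneg, hminus] at hsplit
    have hcard : (Finset.univ : Finset (Stmt17.Idx n p)).card = Nat.choose n p := by
      rw [Finset.card_univ]
      simp [Fintype.card_finset_len, Fintype.card_fin]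
    rw [hcard] at hsplit
    have := Nat.eq_sub_of_add_eq hsplit
    convert this using 3
  · rw [Finset.filter_congr (fun I _ => hd'neg I)]
    exact Stmt17.count_odd r s p T hs1 hTc
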